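/- Let δ ∈ (0,2) and β > 0, and let L : ℝ → ℝ be a measurable function satisfying |L(θ)| ≤ β·exp(|θ|^{2−δ}) for all θ ∈ ℝ. Fix θ ∈ ℝ. Then the map σ ↦ L_σ(θ) is differentiable on (0, ∞) and its derivative with respect to the smoothing standard deviation σ is (∂/∂σ) L_σ(θ) = (1/σ³)·E_{ε ~ N(0,σ²)}[(ε² − σ²)·L(θ + ε)] (the PGPE standard-deviation gradient). -/

import Mathlib

open MeasureTheory ProbabilityTheory Real

lemma aux_rpow {δ : ℝ} (hδ0 : 0 < δ) (hδ2 : δ < 2) {η : ℝ} (hη : 0 < η) :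
    ∃ C : ℝ, 0 ≤ C ∧ ∀ t : ℝ, 0 ≤ t → t ^ (2 - δ) ≤ η * t ^ 2 + C := by
  set T : ℝ := max 1 (η ^ (-(1/δ))) with hT
  have hT1 : (1:ℝ) ≤ T := le_max_left _ _
  have hT0 : (0:ℝ) < T := lt_of_lt_of_le one_pos hT1
  refine ⟨T ^ (2 - δ), Real.rpow_nonneg hT0.le _, fun t ht => ?_⟩
  rcases le_total t T with h | h
  · have h1 : t ^ (2-δ) ≤ T ^ (2-δ) := Real.rpow_le_rpow ht h (by linarith)
    have h2 : 0 ≤ η * t ^ 2 := mul_nonneg hη.le (sq_nonneg t)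
    linarith
  · have ht1 : (1:ℝ) ≤ t := hT1.trans h
    have ht0 : (0:ℝ) < t := lt_of_lt_of_le one_pos ht1
    have h1 : t ^ (2 - δ) = t ^ (2:ℝ) * t ^ (-δ) := by
      rw [← Real.rpow_add ht0]; ring_nf
    have h2 : t ^ (-δ) ≤ η := by
      have hη' : (0:ℝ) < η ^ (-(1/δ)) := Real.rpow_pos_of_pos hη _
      have hT' : η ^ (-(1/δ)) ≤ t := (le_max_right _ _).trans h
      have key : (η ^ (-(1/δ))) ^ (-δ) = η := by
        rw [← Real.rpow_mul hη.le, show (-(1/δ))*(-δ) = 1 by field_simp, Real.rpow_one]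
      calc t ^ (-δ) ≤ (η ^ (-(1/δ))) ^ (-δ) :=
              Real.rpow_le_rpow_of_nonpos hη' hT' (by linarith)
        _ = η := key
    have h3 : t ^ ((2:ℝ)) = t ^ 2 := Real.rpow_two t
    have h4 : 0 ≤ t ^ (2:ℝ) := Real.rpow_nonneg ht0.le _
    have h5 : 0 ≤ T ^ (2-δ) := Real.rpow_nonneg hT0.le _
    calc t ^ (2-δ) = t ^ (2:ℝ) * t ^ (-δ) := h1
      _ ≤ t ^ (2:ℝ) * η := by exact mul_le_mul_of_nonneg_left h2 h4
      _ = η * t ^ 2 := by rw [h3]; ring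
      _ ≤ η * t ^ 2 + T ^ (2-δ) := by linarith

lemma Lbound {δ β : ℝ} (hδ : δ ∈ Set.Ioo (0 : ℝ) 2) (hβ : 0 < β)
    {L : ℝ → ℝ} (hgrowth : ∀ θ : ℝ, |L θ| ≤ β * Real.exp (|θ| ^ (2 - δ)))
    (θ : ℝ) {η : ℝ} (hη : 0 < η) :
    ∃ K : ℝ, 0 < K ∧ ∀ x : ℝ, |L (θ + x)| ≤ K * Real.exp (η * x ^ 2) := by
  obtain ⟨C, hC0, hC⟩ := aux_rpow hδ.1 hδ.2 (half_pos hη)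
  refine ⟨β * Real.exp (η * θ ^ 2 + C), by positivity, fun x => ?_⟩
  have h1 : |θ + x| ^ (2 - δ) ≤ (|θ| + |x|) ^ (2 - δ) :=
    Real.rpow_le_rpow (abs_nonneg _) (abs_add_le _ _) (by linarith [hδ.2])
  have h2 := hC (|θ| + |x|) (by positivity)
  have h3 : (|θ| + |x|) ^ 2 ≤ 2 * θ ^ 2 + 2 * x ^ 2 := by
    nlinarith [sq_nonneg (|θ| - |x|), sq_abs θ, sq_abs x]
  have h4 : |θ + x| ^ (2 - δ) ≤ (η * θ ^ 2 + C) + η * x ^ 2 := by nlinarith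
  calc |L (θ + x)| ≤ β * Real.exp (|θ + x| ^ (2 - δ)) := hgrowth _
    _ ≤ β * Real.exp ((η * θ ^ 2 + C) + η * x ^ 2) := by
        gcongr
    _ = β * Real.exp (η * θ ^ 2 + C) * Real.exp (η * x ^ 2) := by
        rw [Real.exp_add]; ring

lemma pdf_eq {s : ℝ} (hs : 0 < s) (x : ℝ) :
    gaussianPDFReal 0 ⟨s^2, sq_nonneg s⟩ x
      = (Real.sqrt (2*π))⁻¹ * (s⁻¹ * Real.exp (-(x^2/2) * (s^2)⁻¹)) := by
  show (√(2 * π * (s^2:ℝ)))⁻¹ * rexp (-(x - 0) ^ 2 / (2 * (s^2:ℝ))) = _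
  simp only [NNReal.coe_mk, sub_zero]
  rw [Real.sqrt_mul (by positivity : (0:ℝ) ≤ 2*π), Real.sqrt_sq hs.le, mul_inv, mul_assoc]
  congr 2
  field_simp

lemma integral_gaussianReal_eq {s : ℝ} (hs : s ≠ 0) (f : ℝ → ℝ) :
    ∫ x, f x ∂(gaussianReal 0 ⟨s^2, sq_nonneg s⟩)
      = ∫ x, gaussianPDFReal 0 ⟨s^2, sq_nonneg s⟩ x * f x := by
  have hv : (⟨s^2, sq_nonneg s⟩ : NNReal) ≠ 0 := by
    intro h
    have := congrArg NNReal.toReal h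
    exact hs ((pow_eq_zero_iff (n := 2) two_ne_zero).mp (by exact this))
  rw [gaussianReal_of_var_ne_zero _ hv]
  have heq : (volume : Measure ℝ).withDensity (gaussianPDF 0 ⟨s^2, sq_nonneg s⟩)
      = (volume : Measure ℝ).withDensity
        (fun x => ((Real.toNNReal (gaussianPDFReal 0 ⟨s^2, sq_nonneg s⟩ x) : NNReal) : ENNReal)) := rfl
  rw [heq]
  refine (integral_withDensity_eq_integral_smul
      ((measurable_gaussianPDFReal 0 _).real_toNNReal) f).trans ?_
  congr 1; funext x
  rw [NNReal.smul_def, smul_eq_mul]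
  exact congrArg (· * f x) (Real.coe_toNNReal _ (gaussianPDFReal_nonneg _ _ _))

lemma gdiff (x : ℝ) {s : ℝ} (hs : 0 < s) :
    HasDerivAt (fun s : ℝ => (Real.sqrt (2*π))⁻¹ * (s⁻¹ * Real.exp (-(x^2/2) * (s^2)⁻¹)))
      ((Real.sqrt (2*π))⁻¹ * (s⁻¹ * Real.exp (-(x^2/2) * (s^2)⁻¹)) * ((x^2 - s^2)/s^3)) s := by
  have hs0 : s ≠ 0 := hs.ne'
  have h1 : HasDerivAt (fun s : ℝ => s^2) (2*s) s := by simpa using hasDerivAt_pow 2 s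
  have h2 := h1.inv (pow_ne_zero 2 hs0)
  have h3 := HasDerivAt.const_mul (-(x^2/2)) h2
  have h4 := h3.exp
  have h5 := hasDerivAt_inv hs0
  have h6 := HasDerivAt.const_mul ((Real.sqrt (2*π))⁻¹) (h5.mul h4)
  refine h6.congr_deriv ?_
  simp only [Pi.inv_apply]
  field_simp
  ring

noncomputable def gaussianSmoothing (L : ℝ → ℝ) (σ θ : ℝ) : ℝ :=
  ∫ ε, L (θ + ε) ∂(gaussianReal 0 ⟨σ ^ 2, sq_nonneg σ⟩)

theorem gaussian_smoothing_deriv_in_sigma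
    (δ β : ℝ) (hδ : δ ∈ Set.Ioo (0 : ℝ) 2) (hβ : 0 < β)
    (L : ℝ → ℝ) (hL : Measurable L)
    (hgrowth : ∀ θ : ℝ, |L θ| ≤ β * Real.exp (|θ| ^ (2 - δ)))
    (θ : ℝ) :
    ∀ σ : ℝ, 0 < σ →
      HasDerivAt (fun s : ℝ => gaussianSmoothing L s θ)
        ((1 / σ ^ 3) *
          ∫ ε, (ε ^ 2 - σ ^ 2) * L (θ + ε) ∂(gaussianReal 0 ⟨σ ^ 2, sq_nonneg σ⟩)) σ := by
  intro σ hσ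
  -- notation
  set a : ℝ := σ / 2 with ha
  set b : ℝ := 2 * σ with hb
  have ha0 : 0 < a := by positivity
  have hb0 : 0 < b := by positivity
  set c : ℝ := (4 * b ^ 2)⁻¹ with hc
  have hc0 : 0 < c := by positivity
  obtain ⟨K, hK0, hKb⟩ := Lbound hδ hβ hgrowth θ hc0
  -- the density as a function of (s, x)
  set g : ℝ → ℝ → ℝ :=
    fun s x => (Real.sqrt (2*π))⁻¹ * (s⁻¹ * Real.exp (-(x^2/2) * (s^2)⁻¹)) with hg
  have hmeasL : Measurable fun x : ℝ => L (θ + x) :=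
    hL.comp (measurable_const.add measurable_id)
  have hgmeas : ∀ s : ℝ, Measurable fun x : ℝ => g s x := by
    intro s; fun_prop
  -- bounds for s in the ball
  have hballs : ∀ s ∈ Metric.ball σ (σ / 2), a < s ∧ s < 3 * σ / 2 := by
    intro s hs
    rw [Metric.mem_ball, Real.dist_eq, abs_lt] at hs
    constructor <;> [linarith [hs.1]; linarith [hs.2]]
  -- pointwise bound on g
  have hgpos : ∀ s x : ℝ, 0 < s → 0 < g s x := by
    intro s x hs0
    have : (0:ℝ) < Real.sqrt (2*π) := Real.sqrt_pos.mpr (by positivity)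
    positivity
  have hgle : ∀ s x : ℝ, a < s → s ≤ b →
      g s x ≤ (Real.sqrt (2*π))⁻¹ * (a⁻¹ * Real.exp (-(x^2/2) * (b^2)⁻¹)) := by
    intro s x has hsb
    have hs0 : 0 < s := ha0.trans has
    have hsqrt : (0:ℝ) < Real.sqrt (2*π) := Real.sqrt_pos.mpr (by positivity)
    have h1 : s⁻¹ ≤ a⁻¹ := by
      rw [inv_le_inv₀ hs0 ha0]; exact has.le
    have h2 : Real.exp (-(x^2/2) * (s^2)⁻¹) ≤ Real.exp (-(x^2/2) * (b^2)⁻¹) := by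
      apply Real.exp_le_exp.mpr
      apply mul_le_mul_of_nonpos_left _ (by nlinarith [sq_nonneg x] : -(x^2/2) ≤ 0)
      rw [inv_le_inv₀ (by positivity) (by positivity)]
      exact pow_le_pow_left₀ hs0.le hsb 2
    rw [hg]
    exact mul_le_mul_of_nonneg_left
      (mul_le_mul h1 h2 (Real.exp_pos _).le (by positivity)) (by positivity)
  -- exponent combination
  have harg : ∀ x : ℝ, -(x^2/2) * (b^2)⁻¹ + c * x^2 = -c * x^2 := by
    intro x; rw [hc]; field_simp; ring
  -- the bound function for the derivative
  set C0 : ℝ := (Real.sqrt (2*π))⁻¹ * a⁻¹ * K / a ^ 3 with hC0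
  have hC0pos : 0 < C0 := by
    have hsqrt : (0:ℝ) < Real.sqrt (2*π) := Real.sqrt_pos.mpr (by positivity)
    positivity
  set bound : ℝ → ℝ := fun x => C0 * ((x ^ 2 + b ^ 2) * Real.exp (-c * x ^ 2)) with hbound
  have hbound_int : Integrable bound := by
    have h1 : Integrable (fun x : ℝ => x ^ 2 * Real.exp (-c * x ^ 2)) := by
      have := integrable_rpow_mul_exp_neg_mul_sq hc0 (s := 2) (by norm_num)
      simpa [Real.rpow_two] using this
    have h2 : Integrable (fun x : ℝ => Real.exp (-c * x ^ 2)) :=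
      integrable_exp_neg_mul_sq hc0
    have heq : bound = fun x =>
        C0 * (x ^ 2 * Real.exp (-c * x ^ 2)) + (C0 * b ^ 2) * Real.exp (-c * x ^ 2) := by
      funext x; rw [hbound]; ring
    rw [heq]
    exact (h1.const_mul C0).add (h2.const_mul (C0 * b ^ 2))
  -- the key application
  have key := hasDerivAt_integral_of_dominated_loc_of_deriv_le
      (μ := (volume : Measure ℝ)) (x₀ := σ)
      (F := fun s x => g s x * L (θ + x))
      (F' := fun s x => g s x * ((x ^ 2 - s ^ 2) / s ^ 3) * L (θ + x))
      (bound := bound)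
      (Metric.ball_mem_nhds σ (half_pos hσ))
      (Filter.Eventually.of_forall fun s =>
        ((hgmeas s).mul hmeasL).aestronglyMeasurable)
      ?hFint
      ?hF'meas
      ?hbnd
      hbound_int
      ?hdiff
  case hFint =>
    -- Integrable (fun x => g σ x * L (θ + x))
    refine Integrable.mono' ((integrable_exp_neg_mul_sq hc0).const_mul
      ((Real.sqrt (2*π))⁻¹ * a⁻¹ * K)) ((hgmeas σ).mul hmeasL).aestronglyMeasurable ?_
    refine Filter.Eventually.of_forall fun x => ?_
    have h1 : g σ x ≤ (Real.sqrt (2*π))⁻¹ * (a⁻¹ * Real.exp (-(x^2/2) * (b^2)⁻¹)) :=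
      hgle σ x (by rw [ha]; linarith) (by rw [hb]; linarith)
    have h2 := hKb x
    have hgp := (hgpos σ x hσ).le
    calc ‖g σ x * L (θ + x)‖ = g σ x * |L (θ + x)| := by
          rw [norm_eq_abs, abs_mul, abs_of_nonneg hgp]
      _ ≤ ((Real.sqrt (2*π))⁻¹ * (a⁻¹ * Real.exp (-(x^2/2) * (b^2)⁻¹))) *
            (K * Real.exp (c * x ^ 2)) := by
          apply mul_le_mul h1 h2 (abs_nonneg _)
          positivity
      _ = (Real.sqrt (2*π))⁻¹ * a⁻¹ * K *
            (Real.exp (-(x^2/2) * (b^2)⁻¹) * Real.exp (c * x ^ 2)) := by ring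
      _ = (Real.sqrt (2*π))⁻¹ * a⁻¹ * K * Real.exp (-c * x ^ 2) := by
          rw [← Real.exp_add, harg x]
  case hF'meas =>
    exact (((hgmeas σ).mul
      (by fun_prop : Measurable fun x : ℝ => (x ^ 2 - σ ^ 2) / σ ^ 3)).mul
      hmeasL).aestronglyMeasurable
  case hbnd =>
    refine Filter.Eventually.of_forall fun x => fun s hs => ?_
    obtain ⟨has, hs32⟩ := hballs s hs
    have hs0 : 0 < s := ha0.trans has
    have hsb : s ≤ b := by rw [hb]; linarith
    have h1 := hgle s x has hsb
    have habs : |x ^ 2 - s ^ 2| ≤ x ^ 2 + b ^ 2 := by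
      have : s ^ 2 ≤ b ^ 2 := pow_le_pow_left₀ hs0.le hsb 2
      rw [abs_sub_comm, abs_le]
      constructor <;> nlinarith [sq_nonneg x, sq_nonneg s]
    have hs3 : a ^ 3 ≤ s ^ 3 := pow_le_pow_left₀ ha0.le has.le 3
    have h2 : |x ^ 2 - s ^ 2| / s ^ 3 ≤ (x ^ 2 + b ^ 2) / a ^ 3 :=
      div_le_div₀ (by positivity) habs (by positivity) hs3
    have h3 := hKb x
    have hgp := (hgpos s x hs0).le
    calc ‖g s x * ((x ^ 2 - s ^ 2) / s ^ 3) * L (θ + x)‖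
        = g s x * (|x ^ 2 - s ^ 2| / s ^ 3) * |L (θ + x)| := by
          rw [norm_eq_abs, abs_mul, abs_mul, abs_div, abs_of_nonneg hgp,
            abs_of_nonneg (by positivity : (0:ℝ) ≤ s ^ 3)]
      _ ≤ ((Real.sqrt (2*π))⁻¹ * (a⁻¹ * Real.exp (-(x^2/2) * (b^2)⁻¹))) *
            ((x ^ 2 + b ^ 2) / a ^ 3) * (K * Real.exp (c * x ^ 2)) := by
          apply mul_le_mul _ h3 (abs_nonneg _) (by positivity)
          apply mul_le_mul h1 h2 (by positivity) (by positivity)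
      _ = C0 * ((x ^ 2 + b ^ 2) *
            (Real.exp (-(x^2/2) * (b^2)⁻¹) * Real.exp (c * x ^ 2))) := by
          rw [hC0]; field_simp
      _ = bound x := by rw [hbound, ← Real.exp_add, harg x]
  case hdiff =>
    refine Filter.Eventually.of_forall fun x => fun s hs => ?_
    obtain ⟨has, _⟩ := hballs s hs
    have hs0 : 0 < s := ha0.trans has
    exact (gdiff x hs0).mul_const (L (θ + x))
  -- now transfer
  have hD := key.2
  have heq : (fun s : ℝ => gaussianSmoothing L s θ)
      =ᶠ[nhds σ] (fun s => ∫ x, g s x * L (θ + x)) := by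
    filter_upwards [eventually_gt_nhds hσ] with s hs
    rw [gaussianSmoothing, integral_gaussianReal_eq hs.ne']
    congr 1; funext x
    rw [pdf_eq hs x]
  have hDfinal := hD.congr_of_eventuallyEq heq
  refine hDfinal.congr_deriv ?_
  rw [integral_gaussianReal_eq hσ.ne']
  rw [← integral_const_mul]
  congr 1; funext x
  rw [pdf_eq hσ x]
  ring
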